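/- (Two-level atom passivity and unit-gain identity.) Let s be a bounded operator on a complex Hilbert space satisfying s² = 0 and s s* s = s (as the lowering operator σ₋ of a two-level atom does), let γ ≥ 0 be real, and let w be any bounded operator. Then 𝓛_{√γ s}(s*s) + √γ ( w*[s*s, s] + [s*, s*s]w ) = −(√γ s + w)*(√γ s + w) + w*w. In particular 𝓛_{√γ s}(s*s) = −γ s*s. -/

import Mathlib

/-! The relations `s² = 0` and `s s* s = s` collapse the commutators `[s*s, s]` and `[s*, s*s]`
to `-s` and `-s*`, and `𝓛_L` is quadratic in `L`; the identity is then the expansion of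
`(√γ s + w)*(√γ s + w)`. -/

noncomputable section

variable {E : Type*} [NormedAddCommGroup E] [InnerProductSpace ℂ E] [CompleteSpace E]

/-- The single-channel Lindblad superoperator `𝓛_L(X) = (1/2)(L*[X,L] + [L*,X]L)`. -/
def lind1 (L X : E →L[ℂ] E) : E →L[ℂ] E :=
  (2 : ℂ)⁻¹ • (star L * ⁅X, L⁆ + ⁅star L, X⁆ * L)

section LoweringOperator

variable {A : Type*} [Ring A] [StarRing A] {s : A}

theorem star_star_mul_self_eq_zero (hs2 : s * s = 0) : star s * star s = 0 := by
  rw [← star_mul, hs2, star_zero]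

theorem star_mul_self_mul_star (hsss : s * star s * s = s) :
    star s * s * star s = star s := by
  simpa only [star_mul, star_star, mul_assoc] using congrArg star hsss

theorem lie_star_mul_self_left (hs2 : s * s = 0) (hsss : s * star s * s = s) :
    ⁅star s * s, s⁆ = -s := by
  rw [Ring.lie_def, mul_assoc, hs2, mul_zero, ← mul_assoc, hsss, zero_sub]

theorem lie_star_star_mul_self (hs2 : s * s = 0) (hsss : s * star s * s = s) :
    ⁅star s, star s * s⁆ = -star s := by
  rw [Ring.lie_def, ← mul_assoc, star_star_mul_self_eq_zero hs2, zero_mul,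
    star_mul_self_mul_star hsss, zero_sub]

end LoweringOperator

theorem star_smul_add_mul_smul_add {R A : Type*} [CommSemiring R] [StarRing R] [Ring A]
    [StarRing A] [Algebra R A] [StarModule R A] {c : R} (hc : IsSelfAdjoint c) (s w : A) :
    star (c • s + w) * (c • s + w)
      = (c * c) • (star s * s) + c • (star w * s + star s * w) + star w * w := by
  rw [star_add, star_smul, hc.star_eq]
  simp only [add_mul, mul_add, smul_mul_assoc, mul_smul_comm, smul_add, smul_smul]
  abel

theorem lind1_smul (c : ℂ) (L X : E →L[ℂ] E) :
    lind1 (c • L) X = (star c * c) • lind1 L X := by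
  simp only [lind1, Ring.lie_def, star_smul, smul_mul_assoc, mul_smul_comm, mul_sub, sub_mul,
    smul_sub, smul_add, smul_smul, mul_comm]

theorem lind1_star_mul_self {s : E →L[ℂ] E} (hs2 : s * s = 0) (hsss : s * star s * s = s) :
    lind1 s (star s * s) = -(star s * s) := by
  rw [lind1, lie_star_mul_self_left hs2 hsss, lie_star_star_mul_self hs2 hsss, mul_neg, neg_mul,
    ← neg_add, ← two_smul ℂ, smul_neg, smul_smul, inv_mul_cancel₀ two_ne_zero, one_smul]

/-- two-level atom passivity and unit-gain identity: if `s² = 0` and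
`s s* s = s` (as for the lowering operator `σ₋`), `γ ≥ 0`, and `w` is any bounded
operator, then
`𝓛_{√γ s}(s*s) + √γ (w*[s*s, s] + [s*, s*s]w) = −(√γ s + w)*(√γ s + w) + w*w`,
and in particular `𝓛_{√γ s}(s*s) = −γ s*s`. -/
theorem stmt_15 (s w : E →L[ℂ] E) (γ : ℝ) (hγ : 0 ≤ γ)
    (hs2 : s * s = 0) (hsss : s * star s * s = s) :
    (lind1 ((Real.sqrt γ : ℂ) • s) (star s * s)
        + (Real.sqrt γ : ℂ) • (star w * ⁅star s * s, s⁆ + ⁅star s, star s * s⁆ * w)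
      = -(star ((Real.sqrt γ : ℂ) • s + w) * ((Real.sqrt γ : ℂ) • s + w))
          + star w * w)
      ∧ lind1 ((Real.sqrt γ : ℂ) • s) (star s * s) = (-(γ : ℂ)) • (star s * s) := by
  have hsqrt : (Real.sqrt γ : ℂ) * Real.sqrt γ = γ := by exact_mod_cast Real.mul_self_sqrt hγ
  have hself : IsSelfAdjoint (Real.sqrt γ : ℂ) := Complex.conj_ofReal _
  have hlind : lind1 ((Real.sqrt γ : ℂ) • s) (star s * s) = (-(γ : ℂ)) • (star s * s) := by
    rw [lind1_smul, hself.star_eq, hsqrt, lind1_star_mul_self hs2 hsss, smul_neg, neg_smul]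
  refine ⟨?_, hlind⟩
  rw [hlind, lie_star_mul_self_left hs2 hsss, lie_star_star_mul_self hs2 hsss,
    star_smul_add_mul_smul_add hself, hsqrt]
  simp only [mul_neg, neg_mul, smul_neg, smul_add, neg_smul]
  abel
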